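/- arXiv:1412.2834 — 11 statements merged into one kernel-verified Lean document; each statement's English description precedes it below -/
import Mathlib

section
/- In the plane ℝ², the family consisting of the vertical segments {1/n} × [0,1] for n ∈ ℕ together with the horizontal segment [0,1] × {0} is strongly point-finite but not star-finite. -/
def StarFinite {X : Type*} (𝒜 : Set (Set X)) : Prop :=
  ∀ A ∈ 𝒜, {B ∈ 𝒜 | (B ∩ A).Nonempty}.Finite

def StronglyPointFinite {X : Type*} (𝒜 : Set (Set X)) : Prop :=
  ∀ μ ⊆ 𝒜, μ.Countable → μ.Infinite → ∃ μ' ⊆ μ, μ'.Finite ∧ ⋂₀ μ' = ∅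

open Set

lemma Vinj {n m : ℕ} (hn : 0 < n) (hm : 0 < m)
    (h : ({(1:ℝ)/n} : Set ℝ) ×ˢ Icc (0:ℝ) 1 = ({(1:ℝ)/m} : Set ℝ) ×ˢ Icc (0:ℝ) 1) :
    n = m := by
  have hmem : ((1:ℝ)/n, (0:ℝ)) ∈ ({(1:ℝ)/m} : Set ℝ) ×ˢ Icc (0:ℝ) 1 := by
    rw [← h]; exact ⟨rfl, by norm_num⟩
  have h1 : (1:ℝ)/n = 1/m := hmem.1
  have hn0 : (n:ℝ) ≠ 0 := by positivity
  have hm0 : (m:ℝ) ≠ 0 := by positivity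
  field_simp at h1
  exact_mod_cast h1.symm

theorem example_strongly_point_finite_not_star_finite :
    StronglyPointFinite
      (insert ((Set.Icc (0:ℝ) 1) ×ˢ ({0} : Set ℝ))
        {S : Set (ℝ × ℝ) | ∃ n : ℕ, 0 < n ∧ S = ({(1:ℝ)/n} : Set ℝ) ×ˢ Set.Icc (0:ℝ) 1}) ∧
    ¬ StarFinite
      (insert ((Set.Icc (0:ℝ) 1) ×ˢ ({0} : Set ℝ))
        {S : Set (ℝ × ℝ) | ∃ n : ℕ, 0 < n ∧ S = ({(1:ℝ)/n} : Set ℝ) ×ˢ Set.Icc (0:ℝ) 1}) := by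
  set H : Set (ℝ × ℝ) := (Set.Icc (0:ℝ) 1) ×ˢ ({0} : Set ℝ) with hH
  set 𝒱 : Set (Set (ℝ × ℝ)) :=
    {S : Set (ℝ × ℝ) | ∃ n : ℕ, 0 < n ∧ S = ({(1:ℝ)/n} : Set ℝ) ×ˢ Set.Icc (0:ℝ) 1} with h𝒱
  constructor
  · intro μ hμ _ hinf
    have hinf' : (μ \ {H}).Infinite := hinf.diff (finite_singleton H)
    obtain ⟨A, hA⟩ := hinf'.nonempty
    obtain ⟨B, hB⟩ := (hinf'.diff (finite_singleton A)).nonempty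
    have hA𝒱 : A ∈ 𝒱 := by
      rcases hμ hA.1 with h | h
      · exact absurd h hA.2
      · exact h
    have hB𝒱 : B ∈ 𝒱 := by
      rcases hμ hB.1.1 with h | h
      · exact absurd h hB.1.2
      · exact h
    obtain ⟨n, hn, hAeq⟩ := hA𝒱
    obtain ⟨m, hm, hBeq⟩ := hB𝒱
    have hnm : n ≠ m := by
      rintro rfl
      exact hB.2 (by rw [Set.mem_singleton_iff, hBeq, hAeq])
    refine ⟨{A, B}, ?_, (Set.finite_singleton B).insert A, ?_⟩
    · exact Set.insert_subset hA.1 (Set.singleton_subset_iff.2 hB.1.1)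
    · rw [Set.sInter_pair, hAeq, hBeq]
      ext ⟨x, y⟩
      simp only [Set.mem_inter_iff, Set.mem_prod, Set.mem_singleton_iff, Set.mem_empty_iff_false,
        iff_false]
      rintro ⟨⟨rfl, -⟩, hx2, -⟩
      have : (1:ℝ)/n = 1/m := hx2
      have hn0 : (n:ℝ) ≠ 0 := by positivity
      have hm0 : (m:ℝ) ≠ 0 := by positivity
      field_simp at this
      exact hnm (by exact_mod_cast this.symm)
  · intro hsf
    have hfin := hsf H (Set.mem_insert _ _)
    have hinf : {B ∈ insert H 𝒱 | (B ∩ H).Nonempty}.Infinite := by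
      apply Set.infinite_of_injective_forall_mem
        (f := fun k : ℕ => ({(1:ℝ)/(k+1)} : Set ℝ) ×ˢ Set.Icc (0:ℝ) 1)
      · intro a b hab
        have := Vinj (Nat.succ_pos a) (Nat.succ_pos b) (by exact_mod_cast hab)
        omega
      · intro k
        refine ⟨Set.mem_insert_iff.2 (Or.inr ⟨k+1, Nat.succ_pos k, by push_cast; rfl⟩), ?_⟩
        refine ⟨((1:ℝ)/(k+1), 0), ⟨rfl, by norm_num⟩, ?_, rfl⟩
        constructor
        · positivity
        · rw [div_le_one (by positivity)]
          exact_mod_cast Nat.one_le_iff_ne_zero.2 (Nat.succ_ne_zero k)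
    exact hinf hfin
end

section
/- Let X be a dense subspace of a topological space Y and let γ be a strongly point-finite family of open subsets of X. Then the family Ex_Y γ = {Ex_Y U : U ∈ γ}, where Ex_Y U = Y \ cl_Y(X \ U), is a strongly point-finite family of open subsets of Y. -/
theorem ex_strongly_point_finite {Y : Type*} [TopologicalSpace Y] (X : Set Y)
    (hX : Dense X) (γ : Set (Set Y))
    (hopen : ∀ U ∈ γ, U ⊆ X ∧ ∃ V : Set Y, IsOpen V ∧ U = V ∩ X)
    (hspf : StronglyPointFinite γ) :
    StronglyPointFinite ((fun U => (closure (X \ U))ᶜ) '' γ) ∧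
      ∀ W ∈ (fun U => (closure (X \ U))ᶜ) '' γ, IsOpen W := by
  set f : Set Y → Set Y := fun U => (closure (X \ U))ᶜ with hf
  -- Key: f U ∩ X = U for U ∈ γ
  have key : ∀ U ∈ γ, f U ∩ X = U := by
    intro U hU
    obtain ⟨hUX, V, hV, rfl⟩ := hopen U hU
    apply Set.Subset.antisymm
    · rintro y ⟨hy, hyX⟩
      by_contra hyU
      exact hy (subset_closure ⟨hyX, hyU⟩)
    · rintro y ⟨hyV, hyX⟩
      refine ⟨?_, hyX⟩
      intro hy
      obtain ⟨z, hzV, hzX, hzU⟩ := mem_closure_iff.mp hy V hV hyV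
      exact hzU ⟨hzV, hzX⟩
  have finj : Set.InjOn f γ := by
    intro U hU V hV hUV
    rw [← key U hU, ← key V hV, hUV]
  constructor
  · intro μ hμ hc hi
    set ν : Set (Set Y) := {U ∈ γ | f U ∈ μ} with hν
    have hνγ : ν ⊆ γ := fun U hU => hU.1
    have himg : f '' ν = μ := by
      apply Set.Subset.antisymm
      · rintro _ ⟨U, hU, rfl⟩; exact hU.2
      · intro W hW
        obtain ⟨U, hUγ, rfl⟩ := hμ hW
        exact ⟨U, ⟨hUγ, hW⟩, rfl⟩
    have hνc : ν.Countable :=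
      Set.countable_of_injective_of_countable_image (finj.mono hνγ) (himg ▸ hc)
    have hνi : ν.Infinite := by
      intro hfin
      exact hi (himg ▸ hfin.image f)
    obtain ⟨ν', hν'ν, hν'f, hν'e⟩ := hspf ν hνγ hνc hνi
    refine ⟨f '' ν', ?_, hν'f.image f, ?_⟩
    · rintro _ ⟨U, hU, rfl⟩; exact (hν'ν hU).2
    · have hXint : ⋂₀ (f '' ν') ∩ X = ∅ := by
        ext y
        simp only [Set.mem_inter_iff, Set.mem_sInter, Set.mem_image, Set.mem_empty_iff_false,
          iff_false]
        rintro ⟨hy, hyX⟩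
        have : y ∈ ⋂₀ ν' := by
          intro U hU
          have := hy (f U) ⟨U, hU, rfl⟩
          rw [← key U (hνγ (hν'ν hU))]
          exact ⟨this, hyX⟩
        rw [hν'e] at this
        exact this
      have hop : IsOpen (⋂₀ (f '' ν')) := by
        apply Set.Finite.isOpen_sInter (hν'f.image f)
        rintro _ ⟨U, hU, rfl⟩
        exact isClosed_closure.isOpen_compl
      by_contra hne
      obtain ⟨y, hy⟩ := hX.inter_open_nonempty _ hop
        (Set.nonempty_iff_ne_empty.mpr hne)
      exact absurd (hXint ▸ hy) (Set.notMem_empty y)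
  · rintro _ ⟨U, hU, rfl⟩
    exact isClosed_closure.isOpen_compl
end

section
/- Let X be a dense subspace of a topological space Y and let γ be a family of open subsets of X with finite order at most n (i.e., any n+2 members have empty intersection). Then the family Ex_Y γ = {Ex_Y U : U ∈ γ} of extensions also has order at most n. -/
theorem ex_order_le {Y : Type*} [TopologicalSpace Y] (X : Set Y)
    (hX : Dense X) (γ : Set (Set Y)) (n : ℕ)
    (hopen : ∀ U ∈ γ, U ⊆ X ∧ ∃ V : Set Y, IsOpen V ∧ U = V ∩ X)
    (hord : ∀ μ ⊆ γ, μ.Finite → n + 2 ≤ μ.ncard → ⋂₀ μ = ∅) :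
    ∀ μ ⊆ (fun U => (closure (X \ U))ᶜ) '' γ, μ.Finite → n + 2 ≤ μ.ncard → ⋂₀ μ = ∅ := by
  intro μ hμ hfin hcard
  by_contra h
  have hne : (⋂₀ μ).Nonempty := Set.nonempty_iff_ne_empty.2 h
  have hopenμ : ∀ W ∈ μ, IsOpen W := by
    intro W hW
    obtain ⟨U, _, rfl⟩ := hμ hW
    exact isClosed_closure.isOpen_compl
  have hopenInt : IsOpen (⋂₀ μ) := Set.Finite.isOpen_sInter hfin hopenμ
  obtain ⟨x, hxμ, hxX⟩ := hX.inter_open_nonempty _ hopenInt hne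
  have hex : ∀ W ∈ μ, ∃ U ∈ γ, (closure (X \ U))ᶜ = W := by
    intro W hW
    obtain ⟨U, hU, hUW⟩ := hμ hW
    exact ⟨U, hU, hUW⟩
  choose f hf hfW using hex
  classical
  set g : Set Y → Set Y := fun W => if hW : W ∈ μ then f W hW else ∅ with hg
  have hginj : Set.InjOn g μ := by
    intro W₁ h₁ W₂ h₂ he
    have : (closure (X \ g W₁))ᶜ = (closure (X \ g W₂))ᶜ := by rw [he]
    rw [hg] at this
    simp only [h₁, h₂, dif_pos] at this
    rw [hfW W₁ h₁, hfW W₂ h₂] at this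
    exact this
  have hνsub : g '' μ ⊆ γ := by
    rintro _ ⟨W, hW, rfl⟩
    simp only [hg, dif_pos hW]
    exact hf W hW
  have hνcard : (g '' μ).ncard = μ.ncard := Set.ncard_image_of_injOn hginj
  have hempty : ⋂₀ (g '' μ) = ∅ :=
    hord _ hνsub (hfin.image g) (hνcard ▸ hcard)
  have hxν : x ∈ ⋂₀ (g '' μ) := by
    rintro _ ⟨W, hW, rfl⟩
    have hxW : x ∈ W := hxμ W hW
    have hxW' : x ∉ closure (X \ g W) := by
      simp only [hg, dif_pos hW]
      rw [← hfW W hW] at hxW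
      exact hxW
    by_contra hxg
    exact hxW' (subset_closure ⟨hxX, hxg⟩)
  rw [hempty] at hxν
  exact hxν
end

section
/- Let X be a topological space and suppose V ⊆ X admits a U-representation, i.e., there exist sets U_n(V) (n ≥ 1) with V = ⋃_n U_n(V), U_n(V) ⊆ U_{n+1}(V), each U_{2n-1}(V) a zero-set of X and each U_{2n}(V) a cozero-set of X. Then there exists a continuous function f : X → [0,1] with V = coz(f) and f⁻¹([1/2^{n-1}, 1]) = U_{2n-1}(V) for every n ≥ 1. -/
/-!
Write `Aₙ = U (2n+1)` and `Bₙ = U (2n+2)`, so `Aₙ ⊆ Bₙ ⊆ Aₙ₊₁`. If `Aₙ` is the zero set of `g`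
and `Bₙ` the cozero set of `h`, then `φₙ = h / (g + h)` is continuous with values in `[0, 1]`,
equals `1` exactly on `Aₙ` and `0` exactly off `Bₙ`. Put `f = ∑ 2⁻¹ ^ (k+1) φₖ`. At each point,
`φₖ x ≠ 0` forces `φₖ₊₁ x = 1`, so `(φₖ x)ₖ` reads `0, …, 0, t, 1, 1, …`; comparing it with the
step sequence `𝟙[n ≤ k]` shows `f x ≥ 2⁻¹ ^ n ↔ φₙ x = 1 ↔ x ∈ Aₙ`.
-/

def IsZeroSet {X : Type*} [TopologicalSpace X] (S : Set X) : Prop :=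
  ∃ f : X → ℝ, Continuous f ∧ (∀ x, f x ∈ Set.Icc (0:ℝ) 1) ∧ S = f ⁻¹' {0}

def IsCozeroSet {X : Type*} [TopologicalSpace X] (S : Set X) : Prop :=
  ∃ f : X → ℝ, Continuous f ∧ (∀ x, f x ∈ Set.Icc (0:ℝ) 1) ∧ S = {x | f x ≠ 0}

open Set

lemma tsum_inv_two_pow_succ_mul_ite_le (n : ℕ) :
    ∑' k : ℕ, (2⁻¹ : ℝ) ^ (k + 1) * (if n ≤ k then 1 else 0) = 2⁻¹ ^ n := by
  have : (fun k : ℕ ↦ (2⁻¹ : ℝ) ^ (k + 1) * (if n ≤ k then 1 else 0)) =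
      fun k ↦ (if n ≤ k then (2⁻¹ : ℝ) ^ k else 0) * 2⁻¹ := by
    ext k
    split_ifs <;> ring
  rw [this, tsum_mul_right, tsum_geometric_inv_two_ge]
  ring

section BinarySeries

variable {a : ℕ → ℝ}

lemma summable_inv_two_pow_succ_mul (h0 : ∀ k, 0 ≤ a k) (h1 : ∀ k, a k ≤ 1) :
    Summable fun k ↦ (2⁻¹ : ℝ) ^ (k + 1) * a k :=
  .of_nonneg_of_le (fun k ↦ mul_nonneg (by positivity) (h0 k))
    (fun k ↦ mul_le_of_le_one_right (by positivity) (h1 k))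
    ((summable_geometric_of_lt_one (by norm_num) (by norm_num)).comp_injective
      (add_left_injective 1))

lemma tsum_inv_two_pow_succ_mul_le_one (h0 : ∀ k, 0 ≤ a k) (h1 : ∀ k, a k ≤ 1) :
    ∑' k, (2⁻¹ : ℝ) ^ (k + 1) * a k ≤ 1 :=
  calc ∑' k, (2⁻¹ : ℝ) ^ (k + 1) * a k ≤ ∑' k : ℕ, (2⁻¹ : ℝ) ^ (k + 1) * 1 :=
        (summable_inv_two_pow_succ_mul h0 h1).tsum_le_tsum
          (fun k ↦ mul_le_mul_of_nonneg_left (h1 k) (by positivity))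
          (summable_inv_two_pow_succ_mul (fun _ ↦ zero_le_one) (fun _ ↦ le_rfl))
    _ = 1 := by simpa using tsum_inv_two_pow_succ_mul_ite_le 0

lemma inv_two_pow_le_tsum_iff (h0 : ∀ k, 0 ≤ a k) (h1 : ∀ k, a k ≤ 1)
    (hstep : ∀ k, a k ≠ 0 → a (k + 1) = 1) (n : ℕ) :
    2⁻¹ ^ n ≤ ∑' k, (2⁻¹ : ℝ) ^ (k + 1) * a k ↔ a n = 1 := by
  have hup : ∀ m, a m = 1 → ∀ k, m ≤ k → a k = 1 := fun m ham k hk ↦ by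
    induction k, hk using Nat.le_induction with
    | base => exact ham
    | succ k _ ih => exact hstep k (by simp [ih])
  have hstep_summable : Summable fun k ↦ (2⁻¹ : ℝ) ^ (k + 1) * if n ≤ k then 1 else 0 :=
    summable_inv_two_pow_succ_mul (fun k ↦ by positivity) (fun k ↦ by split_ifs <;> norm_num)
  rw [← tsum_inv_two_pow_succ_mul_ite_le n]
  constructor
  · intro hle
    by_contra han
    have hdown : ∀ k < n, a k = 0 := fun k hk ↦ by
      by_contra hak
      exact han (hup (k + 1) (hstep k hak) n hk)
    refine hle.not_gt (Summable.tsum_lt_tsum_of_nonneg (i := n)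
      (fun k ↦ mul_nonneg (by positivity) (h0 k))
      (fun k ↦ mul_le_mul_of_nonneg_left ?_ (by positivity)) ?_ hstep_summable)
    · split_ifs with hk
      · exact h1 k
      · exact (hdown k (not_le.1 hk)).le
    · rw [if_pos le_rfl]
      exact mul_lt_mul_of_pos_left ((h1 n).lt_of_ne han) (by positivity)
  · intro han
    refine hstep_summable.tsum_le_tsum
      (fun k ↦ mul_le_mul_of_nonneg_left ?_ (by positivity)) (summable_inv_two_pow_succ_mul h0 h1)
    split_ifs with hk
    · exact (hup n han k hk).ge
    · exact h0 k

end BinarySeries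

lemma setOf_ne_zero_eq_iUnion_preimage_Icc_inv_two_pow {α : Type*} {f : α → ℝ}
    (hf : ∀ x, f x ∈ Icc (0 : ℝ) 1) :
    {x | f x ≠ 0} = ⋃ n : ℕ, f ⁻¹' Icc (2⁻¹ ^ n) 1 := by
  ext x
  simp only [mem_ofPred_eq, mem_iUnion, mem_preimage, mem_Icc, (hf x).2, and_true]
  constructor
  · intro hx
    obtain ⟨n, hn⟩ := exists_pow_lt_of_lt_one ((hf x).1.lt_of_ne' hx) (by norm_num : (2⁻¹ : ℝ) < 1)
    exact ⟨n, hn.le⟩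
  · rintro ⟨n, hn⟩
    exact (lt_of_lt_of_le (by positivity) hn).ne'

section ZeroSets

variable {X : Type*} [TopologicalSpace X]

lemma exists_continuous_eq_one_iff_eq_zero_iff_of_subset {A B : Set X} (hA : IsZeroSet A)
    (hB : IsCozeroSet B) (hAB : A ⊆ B) :
    ∃ φ : X → ℝ, Continuous φ ∧ (∀ x, φ x ∈ Icc (0 : ℝ) 1) ∧
      (∀ x, φ x = 1 ↔ x ∈ A) ∧ (∀ x, φ x = 0 ↔ x ∉ B) := by
  obtain ⟨g, hg, hgI, rfl⟩ := hA
  obtain ⟨h, hh, hhI, rfl⟩ := hB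
  have hpos : ∀ x, 0 < g x + h x := fun x ↦ by
    rcases (hgI x).1.eq_or_lt with hgx | hgx
    · linarith [(hhI x).1.lt_of_ne (hAB hgx.symm).symm]
    · linarith [(hhI x).1]
  refine ⟨fun x ↦ h x / (g x + h x), hh.div (hg.add hh) (fun x ↦ (hpos x).ne'),
    fun x ↦ ⟨div_nonneg (hhI x).1 (hpos x).le, ?_⟩, fun x ↦ ?_, fun x ↦ ?_⟩
  · rw [div_le_one (hpos x)]
    linarith [(hgI x).1]
  · rw [div_eq_one_iff_eq (hpos x).ne', mem_preimage, mem_singleton_iff]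
    constructor <;> intro <;> linarith
  · simp [div_eq_zero_iff, (hpos x).ne']

theorem exists_continuous_preimage_Icc_inv_two_pow_eq (A B : ℕ → Set X)
    (hA : ∀ n, IsZeroSet (A n)) (hB : ∀ n, IsCozeroSet (B n))
    (hAB : ∀ n, A n ⊆ B n) (hBA : ∀ n, B n ⊆ A (n + 1)) :
    ∃ f : X → ℝ, Continuous f ∧ (∀ x, f x ∈ Icc (0 : ℝ) 1) ∧
      ∀ n, f ⁻¹' Icc (2⁻¹ ^ n) 1 = A n := by
  choose φ hφ hφI hφ1 hφ0 using fun n ↦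
    exists_continuous_eq_one_iff_eq_zero_iff_of_subset (hA n) (hB n) (hAB n)
  have h0 : ∀ x k, 0 ≤ φ k x := fun x k ↦ (hφI k x).1
  have h1 : ∀ x k, φ k x ≤ 1 := fun x k ↦ (hφI k x).2
  have hstep : ∀ x k, φ k x ≠ 0 → φ (k + 1) x = 1 := fun x k hk ↦
    (hφ1 _ x).2 (hBA k (not_not.1 (mt (hφ0 k x).2 hk)))
  have hf1 : ∀ x, ∑' k, (2⁻¹ : ℝ) ^ (k + 1) * φ k x ≤ 1 := fun x ↦
    tsum_inv_two_pow_succ_mul_le_one (h0 x) (h1 x)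
  refine ⟨fun x ↦ ∑' k, (2⁻¹ : ℝ) ^ (k + 1) * φ k x, ?_,
    fun x ↦ ⟨tsum_nonneg fun k ↦ mul_nonneg (by positivity) (h0 x k), hf1 x⟩, fun n ↦ ?_⟩
  · refine continuous_tsum (fun k ↦ continuous_const.mul (hφ k))
      (summable_inv_two_pow_succ_mul (a := fun _ ↦ 1) (fun _ ↦ zero_le_one) (fun _ ↦ le_rfl))
      fun k x ↦ ?_
    rw [Real.norm_eq_abs, abs_of_nonneg (mul_nonneg (by positivity) (h0 x k)), mul_one]
    exact mul_le_of_le_one_right (by positivity) (h1 x k)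
  · ext x
    simp only [mem_preimage, mem_Icc, hf1 x, and_true]
    rw [inv_two_pow_le_tsum_iff (h0 x) (h1 x) (hstep x), hφ1]

end ZeroSets

theorem urepresentation_gives_function {X : Type*} [TopologicalSpace X]
    (V : Set X) (U : ℕ → Set X)
    (hunion : V = ⋃ n : ℕ, U (n + 1))
    (hmono : ∀ n, 1 ≤ n → U n ⊆ U (n + 1))
    (hodd : ∀ n, 1 ≤ n → IsZeroSet (U (2 * n - 1)))
    (heven : ∀ n, 1 ≤ n → IsCozeroSet (U (2 * n))) :
    ∃ f : X → ℝ, Continuous f ∧ (∀ x, f x ∈ Set.Icc (0:ℝ) 1) ∧ V = {x | f x ≠ 0} ∧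
      ∀ n, 1 ≤ n → f ⁻¹' Set.Icc ((1:ℝ) / 2 ^ (n - 1)) 1 = U (2 * n - 1) := by
  have hU : Monotone fun n ↦ U (n + 1) :=
    monotone_nat_of_le_succ fun n ↦ hmono (n + 1) le_add_self
  obtain ⟨f, hf, hfI, hlevel⟩ := exists_continuous_preimage_Icc_inv_two_pow_eq
    (fun n ↦ U (2 * n + 1)) (fun n ↦ U (2 * n + 2)) (fun n ↦ hodd (n + 1) le_add_self)
    (fun n ↦ heven (n + 1) le_add_self) (fun n ↦ hU (by omega)) (fun n ↦ hU (by omega))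
  refine ⟨f, hf, hfI, ?_, fun n hn ↦ ?_⟩
  · rw [setOf_ne_zero_eq_iUnion_preimage_Icc_inv_two_pow hfI, hunion]
    simp only [hlevel]
    exact subset_antisymm (iUnion_mono fun n ↦ hU (by omega))
      (iUnion_subset fun n ↦ subset_iUnion_of_subset (2 * n) subset_rfl)
  · obtain ⟨m, rfl⟩ := Nat.exists_eq_add_of_le' hn
    rw [show 2 * (m + 1) - 1 = 2 * m + 1 by omega, Nat.add_sub_cancel, one_div, ← inv_pow]
    exact hlevel m
end

section
/- A subset V of a topological space X is U-representable (i.e., V = ⋃_n U_n with U_n ⊆ U_{n+1}, U_{2n-1} a zero-set and U_{2n} a cozero-set for all n ≥ 1) if and only if V is a cozero-set of X. -/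
/-!
A cozero set `{f ≠ 0}` with `0 ≤ f` is exhausted by the alternating chain
`{1/2 ≤ f} ⊆ {1/3 < f} ⊆ {1/4 ≤ f} ⊆ {1/5 < f} ⊆ ⋯` of zero and cozero sets.
Conversely, a U-representable set is the union of the cozero sets `U (2n)` of its chain,
and a countable union of cozero sets `{fₙ ≠ 0}` is the cozero set of `∑ 2⁻ⁿ fₙ`.
-/

open Set Filter

section

variable {X : Type*} [TopologicalSpace X]

def IsURepresentable (V : Set X) : Prop :=
  ∃ U : ℕ → Set X, V = (⋃ n : ℕ, U (n + 1)) ∧ (∀ n, 1 ≤ n → U n ⊆ U (n + 1)) ∧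
    (∀ n, 1 ≤ n → IsZeroSet (U (2 * n - 1))) ∧ (∀ n, 1 ≤ n → IsCozeroSet (U (2 * n)))

theorem min_abs_one_eq_zero_iff {a : ℝ} : min |a| 1 = 0 ↔ a = 0 := by
  constructor
  · intro h
    rcases min_eq_iff.1 h with h | h
    · exact abs_eq_zero.1 h.1
    · exact absurd h.1 one_ne_zero
  · rintro rfl
    simp

theorem isZeroSet_preimage_zero {g : X → ℝ} (hg : Continuous g) : IsZeroSet (g ⁻¹' {0}) :=
  ⟨fun x => min |g x| 1, by fun_prop, fun _ => ⟨by positivity, min_le_right _ _⟩, by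
    ext x; simp [min_abs_one_eq_zero_iff]⟩

theorem isCozeroSet_setOf_ne_zero {g : X → ℝ} (hg : Continuous g) :
    IsCozeroSet {x | g x ≠ 0} :=
  ⟨fun x => min |g x| 1, by fun_prop, fun _ => ⟨by positivity, min_le_right _ _⟩, by
    ext x; simp [min_abs_one_eq_zero_iff]⟩

theorem isZeroSet_setOf_le {f : X → ℝ} (hf : Continuous f) (c : ℝ) :
    IsZeroSet {x | c ≤ f x} := by
  convert isZeroSet_preimage_zero (g := fun x => max (c - f x) 0) (by fun_prop) using 1
  ext x; simp

theorem isCozeroSet_setOf_lt {f : X → ℝ} (hf : Continuous f) (c : ℝ) :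
    IsCozeroSet {x | c < f x} := by
  convert isCozeroSet_setOf_ne_zero (g := fun x => max (f x - c) 0) (by fun_prop) using 1
  ext x; simp

theorem isCozeroSet_iUnion {S : ℕ → Set X} (h : ∀ n, IsCozeroSet (S n)) :
    IsCozeroSet (⋃ n, S n) := by
  choose f hf hf01 hS using h
  have hnonneg : ∀ x n, 0 ≤ (1 / 2 : ℝ) ^ n * f n x := fun x n =>
    mul_nonneg (by positivity) (hf01 n x).1
  have hbound : ∀ n x, ‖(1 / 2 : ℝ) ^ n * f n x‖ ≤ (1 / 2) ^ n := fun n x => by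
    rw [Real.norm_of_nonneg (hnonneg x n)]
    exact mul_le_of_le_one_right (by positivity) (hf01 n x).2
  have hsum : ∀ x, Summable fun n => (1 / 2 : ℝ) ^ n * f n x := fun x =>
    summable_geometric_two.of_norm_bounded (fun n => hbound n x)
  convert isCozeroSet_setOf_ne_zero (g := fun x => ∑' n, (1 / 2 : ℝ) ^ n * f n x)
    (continuous_tsum (fun n => by fun_prop) summable_geometric_two hbound) using 1
  ext x
  simp only [mem_iUnion, hS, mem_ofPred_eq]
  constructor
  · rintro ⟨n, hn⟩
    refine ((hsum x).tsum_pos (hnonneg x) n ?_).ne'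
    exact mul_pos (by positivity) (lt_of_le_of_ne (hf01 n x).1 (Ne.symm hn))
  · intro hx
    by_contra! hzero
    simp [hzero] at hx

theorem IsURepresentable.isCozeroSet {V : Set X} (h : IsURepresentable V) : IsCozeroSet V := by
  obtain ⟨U, rfl, hmono, -, hcozero⟩ := h
  have hU : Monotone fun n => U (n + 1) :=
    monotone_nat_of_le_succ fun n => hmono (n + 1) (Nat.le_add_left 1 n)
  have hodd : Tendsto (fun n : ℕ => 2 * n + 1) atTop atTop :=
    tendsto_atTop_mono (fun n => by simp only [id]; omega) tendsto_id
  rw [← hU.iUnion_comp_tendsto_atTop hodd]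
  exact isCozeroSet_iUnion fun n => hcozero (n + 1) (Nat.le_add_left 1 n)

theorem isURepresentable_setOf_pos {f : X → ℝ} (hf : Continuous f) :
    IsURepresentable {x | 0 < f x} := by
  set t : ℕ → ℝ := fun n => 1 / (n + 1)
  have ht_pos : ∀ n, 0 < t n := fun n => Nat.one_div_pos_of_nat
  have ht_anti : ∀ n, t (n + 1) < t n := fun n =>
    one_div_lt_one_div_of_lt (by positivity) (by push_cast; linarith)
  let U : ℕ → Set X := fun n => if Odd n then {x | t n ≤ f x} else {x | t n < f x}
  have hU_lt : ∀ n, {x | t n < f x} ⊆ U n := fun n x (hx : t n < f x) => by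
    by_cases hn : Odd n
    · simpa only [U, if_pos hn, mem_ofPred_eq] using hx.le
    · simpa only [U, if_neg hn, mem_ofPred_eq] using hx
  have hU_le : ∀ n, U n ⊆ {x | t n ≤ f x} := fun n x hx => by
    by_cases hn : Odd n
    · simpa only [U, if_pos hn] using hx
    · simp only [U, if_neg hn, mem_ofPred_eq] at hx
      exact hx.le
  refine ⟨U, ?_, fun n _ => ?_, fun n hn => ?_, fun n _ => ?_⟩
  · refine Subset.antisymm (fun x hx => ?_) (iUnion_subset fun n x hx => ?_)
    · obtain ⟨n, hn⟩ := exists_nat_one_div_lt (mem_ofPred.1 hx)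
      exact mem_iUnion.2 ⟨n, hU_lt (n + 1) ((ht_anti n).trans hn)⟩
    · exact (ht_pos (n + 1)).trans_le (hU_le (n + 1) hx)
  · exact (hU_le n).trans fun x hx => hU_lt (n + 1) ((ht_anti n).trans_le hx)
  · have hodd : Odd (2 * n - 1) := ⟨n - 1, by omega⟩
    simpa only [U, if_pos hodd] using isZeroSet_setOf_le hf (t (2 * n - 1))
  · have heven : ¬Odd (2 * n) := Nat.not_odd_iff_even.2 (even_two_mul n)
    simpa only [U, if_neg heven] using isCozeroSet_setOf_lt hf (t (2 * n))

theorem IsCozeroSet.isURepresentable {V : Set X} (h : IsCozeroSet V) : IsURepresentable V := by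
  obtain ⟨f, hf, hf01, rfl⟩ := h
  convert isURepresentable_setOf_pos hf using 1
  ext x
  exact (hf01 x).1.lt_iff_ne'.symm

end

theorem urepresentable_iff_cozero {X : Type*} [TopologicalSpace X] (V : Set X) :
    (∃ U : ℕ → Set X, V = (⋃ n : ℕ, U (n + 1)) ∧ (∀ n, 1 ≤ n → U n ⊆ U (n + 1)) ∧
      (∀ n, 1 ≤ n → IsZeroSet (U (2 * n - 1))) ∧ (∀ n, 1 ≤ n → IsCozeroSet (U (2 * n)))) ↔
    IsCozeroSet V :=
  ⟨IsURepresentable.isCozeroSet, IsCozeroSet.isURepresentable⟩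
end

section
/- Let X be a topological space, 𝒰 an F-separating open cover of X, and A, B disjoint compact subsets of X. Then there is a finite subfamily ℰ ⊆ 𝒰 which F-separates every x ∈ A from every x' ∈ B, i.e., for all x ∈ A, x' ∈ B there is U ∈ ℰ with x ∈ U and x' ∉ cl_X(U), or vice versa. -/
def FSeparates {X : Type*} [TopologicalSpace X] (𝒰 : Set (Set X)) (x y : X) : Prop :=
  ∃ U ∈ 𝒰, (x ∈ U ∧ y ∉ closure U) ∨ (y ∈ U ∧ x ∉ closure U)

theorem finite_fseparating_subfamily {X : Type*} [TopologicalSpace X]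
    (𝒰 : Set (Set X)) (hopen : ∀ U ∈ 𝒰, IsOpen U) (hcover : ⋃₀ 𝒰 = Set.univ)
    (hsep : ∀ x y : X, x ≠ y → FSeparates 𝒰 x y)
    (A B : Set X) (hA : IsCompact A) (hB : IsCompact B) (hAB : Disjoint A B) :
    ∃ ℰ ⊆ 𝒰, ℰ.Finite ∧ ∀ x ∈ A, ∀ y ∈ B, FSeparates ℰ x y := by
  classical
  have step1 : ∀ x ∈ A, ∃ ℰ : Set (Set X), ℰ ⊆ 𝒰 ∧ ℰ.Finite ∧
      ∀ y ∈ B, FSeparates ℰ x y := by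
    intro x hx
    have h : ∀ y : X, ∃ U : Set X, y ∈ B →
        U ∈ 𝒰 ∧ ((x ∈ U ∧ y ∉ closure U) ∨ (y ∈ U ∧ x ∉ closure U)) := by
      intro y
      by_cases hy : y ∈ B
      · have hxy : x ≠ y := by
          rintro rfl; exact absurd hy (Set.disjoint_left.mp hAB hx)
        obtain ⟨U, hU, hp⟩ := hsep x y hxy
        exact ⟨U, fun _ => ⟨hU, hp⟩⟩
      · exact ⟨∅, fun h => absurd h hy⟩
    choose U hU using h
    set W : X → Set X := fun y => if x ∈ U y then (closure (U y))ᶜ else U y with hW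
    have hnhds : ∀ y ∈ B, W y ∈ nhds y := by
      intro y hy
      obtain ⟨hUmem, hp⟩ := hU y hy
      rcases hp with ⟨hxU, hycl⟩ | ⟨hyU, hxcl⟩
      · have hEq : W y = (closure (U y))ᶜ := if_pos hxU
        rw [hEq]
        exact (isClosed_closure.isOpen_compl).mem_nhds hycl
      · have hxU : x ∉ U y := fun h => hxcl (subset_closure h)
        have hEq : W y = U y := if_neg hxU
        rw [hEq]
        exact (hopen _ hUmem).mem_nhds hyU
    obtain ⟨t, htB, hcov⟩ := hB.elim_nhds_subcover W hnhds
    refine ⟨U '' ↑t, ?_, (t.finite_toSet.image U), ?_⟩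
    · rintro _ ⟨y, hy, rfl⟩
      exact (hU y (htB y hy)).1
    · intro y hy
      obtain ⟨z, hz, hyW⟩ := Set.mem_iUnion₂.mp (hcov hy)
      refine ⟨U z, Set.mem_image_of_mem U hz, ?_⟩
      obtain ⟨hUmem, hp⟩ := hU z (htB z hz)
      by_cases hxU : x ∈ U z
      · have hy' : y ∈ (closure (U z))ᶜ := by simpa [hW, hxU] using hyW
        exact Or.inl ⟨hxU, hy'⟩
      · have hyU : y ∈ U z := by simpa [hW, hxU] using hyW
        have hxcl : x ∉ closure (U z) := by
          rcases hp with ⟨h1, _⟩ | ⟨_, h2⟩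
          · exact absurd h1 hxU
          · exact h2
        exact Or.inr ⟨hyU, hxcl⟩
  have main : ∀ x : X, ∃ q : Set (Set X) × Set X, x ∈ A →
      q.1 ⊆ 𝒰 ∧ q.1.Finite ∧ IsOpen q.2 ∧ x ∈ q.2 ∧
      ∀ x' ∈ q.2, ∀ y ∈ B, FSeparates q.1 x' y := by
    intro x
    by_cases hx : x ∈ A
    · obtain ⟨ℰ, hsub, hfin, hsepB⟩ := step1 x hx
      refine ⟨(ℰ, ⋂ U ∈ ℰ,
        (if x ∈ U then U else if x ∈ closure U then Set.univ else (closure U)ᶜ)),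
        fun _ => ⟨hsub, hfin, ?_, ?_, ?_⟩⟩
      · apply hfin.isOpen_biInter
        intro V hVe
        split
        · exact hopen V (hsub hVe)
        · split
          · exact isOpen_univ
          · exact isClosed_closure.isOpen_compl
      · apply Set.mem_iInter₂.mpr
        intro V hVe
        split
        · assumption
        · split
          · trivial
          · assumption
      · intro x' hx' y hy
        obtain ⟨V, hVe, hp⟩ := hsepB y hy
        have hx'V := Set.mem_iInter₂.mp hx' V hVe
        rcases hp with ⟨hxV, hycl⟩ | ⟨hyV, hxcl⟩
        · refine ⟨V, hVe, Or.inl ⟨?_, hycl⟩⟩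
          simpa [if_pos hxV] using hx'V
        · have hxV : x ∉ V := fun h => hxcl (subset_closure h)
          refine ⟨V, hVe, Or.inr ⟨hyV, ?_⟩⟩
          simpa [if_neg hxV, if_neg hxcl] using hx'V
    · exact ⟨(∅, ∅), fun h => absurd h hx⟩
  choose q hq using main
  have hnhdsA : ∀ x ∈ A, (q x).2 ∈ nhds x := fun x hx =>
    ((hq x hx).2.2.1).mem_nhds (hq x hx).2.2.2.1
  obtain ⟨s, hsA, hcovA⟩ := hA.elim_nhds_subcover (fun x => (q x).2) hnhdsA
  refine ⟨⋃ x ∈ (s : Set X), (q x).1, ?_, ?_, ?_⟩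
  · intro V hV
    obtain ⟨x, hx, hVx⟩ := Set.mem_iUnion₂.mp hV
    exact (hq x (hsA x hx)).1 hVx
  · exact s.finite_toSet.biUnion fun x hx => (hq x (hsA x hx)).2.1
  · intro x hxA y hy
    obtain ⟨z, hz, hxV⟩ := Set.mem_iUnion₂.mp (hcovA hxA)
    obtain ⟨V, hVe, hp⟩ := (hq z (hsA z hz)).2.2.2.2 x hxV y hy
    exact ⟨V, Set.mem_iUnion₂.mpr ⟨z, hz, hVe⟩, hp⟩
end

section
/- Let X be a Tychonoff (completely regular Hausdorff) topological space of cardinality λ and U an open subset of X. Then there is an open cover {V_α : α < λ} of U and a cover {S_{α,m} : α < λ, m ∈ ℕ} of U by sets closed in X such that (a) S_{α,m} ⊆ V_α ⊆ U for all α, m, and (b) if α > β then S_{α,m} ∩ V_β = ∅ for all m. -/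
/-!
Enumerate `X` as `(x_α)_{α < λ}`. For `x_α ∈ U`, complete regularity gives a continuous
`f_α : X → [0, 1]` with `f_α x_α = 0` and `f_α = 1` off `U`; put `V_α = {f_α < 1}`, the union of
the closed sets `{f_α ≤ 1 - 1/(m+1)}`, and `V_α = ∅` when `x_α ∉ U`. Removing from these closed
sets all `V_β` with `β < α` gives `S_{α,m}`. They still cover `U`: a point of `U` lies in some
`S_{α,m}` for the least `α` with `x ∈ V_α`.
-/

open Set Filter Topology

theorem iUnion_iUnion_sdiff_biUnion_lt {ι X : Type*} [LinearOrder ι] [WellFoundedLT ι]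
    {W : ι → Set X} {C : ι → ℕ → Set X} (hC : ∀ i, ⋃ m, C i m = W i) :
    ⋃ i, ⋃ m, (C i m \ ⋃ j < i, W j) = ⋃ i, W i := by
  refine Subset.antisymm (iUnion_mono fun i => ?_) fun x hx => ?_
  · rw [← hC i]
    exact iUnion_mono fun m => sdiff_subset
  · obtain ⟨i, hxi, hmin⟩ := wellFounded_lt.has_min {i | x ∈ W i} (mem_iUnion.mp hx)
    obtain ⟨m, hm⟩ := mem_iUnion.mp ((hC i).symm ▸ hxi : x ∈ ⋃ m, C i m)
    refine mem_iUnion₂.mpr ⟨i, m, hm, ?_⟩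
    simp only [mem_iUnion, not_exists]
    exact fun j hj hxj => hmin j hxj hj

theorem iUnion_iUnion_eq_iUnion_of_not {ι X : Type*} {p : ι → Prop} {A : ι → Set X}
    (hA : ∀ i, ¬p i → A i = ∅) : ⋃ (i) (_ : p i), A i = ⋃ i, A i :=
  iUnion_congr fun i => by
    by_cases h : p i
    · simp only [h, iUnion_true]
    · simp only [h, iUnion_false, hA i h]

theorem IsOpen.exists_isOpen_mem_subset_iUnion_isClosed {X : Type*} [TopologicalSpace X]
    [CompletelyRegularSpace X] {U : Set X} (hU : IsOpen U) {x : X} (hx : x ∈ U) :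
    ∃ (W : Set X) (C : ℕ → Set X), IsOpen W ∧ x ∈ W ∧ W ⊆ U ∧ (∀ m, IsClosed (C m)) ∧
      ⋃ m, C m = W := by
  obtain ⟨f, hf, hfx, hfU⟩ := CompletelyRegularSpace.completely_regular_isOpen x U hU hx
  set g : X → ℝ := fun y => f y
  have hg : Continuous g := continuous_subtype_val.comp hf
  refine ⟨g ⁻¹' Iio 1, fun m => g ⁻¹' Iic (1 - 1 / (m + 1)), isOpen_Iio.preimage hg,
    by simp [g, hfx], fun y hy => ?_, fun m => isClosed_Iic.preimage hg, ?_⟩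
  · by_contra hyU
    simp [g, hfU hyU] at hy
  · rw [← preimage_iUnion, iUnion_Iic_eq_Iio_of_lt_of_tendsto (F := atTop)]
    · intro m
      simp only [sub_lt_self_iff]
      positivity
    · simpa using tendsto_one_div_add_atTop_nhds_zero_nat.const_sub (1 : ℝ)

theorem IsOpen.exists_iUnion_isOpen_eq_iUnion_isClosed {X : Type*} [TopologicalSpace X]
    [CompletelyRegularSpace X] {U : Set X} (hU : IsOpen U) :
    ∃ (W : X → Set X) (C : X → ℕ → Set X), (∀ x, IsOpen (W x)) ∧ (∀ x m, IsClosed (C x m)) ∧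
      (∀ x, ⋃ m, C x m = W x) ∧ ⋃ x, W x = U := by
  have : ∀ x, ∃ (W : Set X) (C : ℕ → Set X), IsOpen W ∧ (∀ m, IsClosed (C m)) ∧
      ⋃ m, C m = W ∧ W ⊆ U ∧ (x ∈ U → x ∈ W) := by
    intro x
    by_cases hx : x ∈ U
    · obtain ⟨W, C, hW, hxW, hWU, hC, hCW⟩ := hU.exists_isOpen_mem_subset_iUnion_isClosed hx
      exact ⟨W, C, hW, hC, hCW, hWU, fun _ => hxW⟩
    · exact ⟨∅, fun _ => ∅, isOpen_empty, fun _ => isClosed_empty, iUnion_empty, empty_subset _,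
        fun h => absurd h hx⟩
  choose W C hW hC hCW hWU hxW using this
  exact ⟨W, C, hW, hC, hCW, Subset.antisymm (iUnion_subset hWU)
    fun x hx => mem_iUnion.mpr ⟨x, hxW x hx⟩⟩

theorem Cardinal.nonempty_equiv_Iio_ord (X : Type u) :
    Nonempty (Iio (Cardinal.mk X).ord ≃ X) :=
  Cardinal.lift_mk_eq'.mp (by simp)

theorem michael_rudin_lemma_32 {X : Type u} [TopologicalSpace X] [T35Space X]
    (U : Set X) (hU : IsOpen U) :
    ∃ (V : Ordinal.{u} → Set X) (S : Ordinal.{u} → ℕ → Set X),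
      (∀ α < (Cardinal.mk X).ord, IsOpen (V α)) ∧
      (⋃ (α : Ordinal.{u}) (_ : α < (Cardinal.mk X).ord), V α) = U ∧
      (⋃ (α : Ordinal.{u}) (_ : α < (Cardinal.mk X).ord), ⋃ m : ℕ, S α m) = U ∧
      (∀ α < (Cardinal.mk X).ord, ∀ m : ℕ, IsClosed (S α m) ∧ S α m ⊆ V α ∧ V α ⊆ U) ∧
      (∀ α β : Ordinal.{u}, α < (Cardinal.mk X).ord → β < α → ∀ m : ℕ, S α m ∩ V β = ∅) := by
  set κ := (Cardinal.mk X).ord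
  obtain ⟨e⟩ := Cardinal.nonempty_equiv_Iio_ord X
  obtain ⟨W, C, hW, hC, hCW, hWU⟩ := hU.exists_iUnion_isOpen_eq_iUnion_isClosed
  let V : Ordinal.{u} → Set X := fun α => ⋃ h : α < κ, W (e ⟨α, h⟩)
  let D : Ordinal.{u} → ℕ → Set X := fun α m => ⋃ h : α < κ, C (e ⟨α, h⟩) m
  have hDV : ∀ α, ⋃ m, D α m = V α := fun α => by
    simp only [D, V]
    rw [iUnion_comm]
    simp only [hCW]
  have hDV_sub : ∀ α m, D α m ⊆ V α := fun α m => hDV α ▸ subset_iUnion (D α) m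
  have hV_empty : ∀ α, ¬α < κ → V α = ∅ := fun α h => iUnion_eq_empty.mpr fun h' => absurd h' h
  have hV : ⋃ α, V α = U := by
    rw [← hWU, ← e.surjective.iUnion_comp, iUnion_subtype]
    rfl
  refine ⟨V, fun α m => D α m \ ⋃ β < α, V β, fun α _ => isOpen_iUnion fun _ => hW _, ?_, ?_,
    fun α _ m => ⟨?_, sdiff_subset.trans (hDV_sub α m), hV ▸ subset_iUnion V α⟩, ?_⟩
  · rw [iUnion_iUnion_eq_iUnion_of_not hV_empty, hV]
  · rw [iUnion_iUnion_eq_iUnion_of_not fun α h => iUnion_eq_empty.mpr fun m =>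
      subset_empty_iff.mp (sdiff_subset.trans ((hDV_sub α m).trans (hV_empty α h).le)),
      iUnion_iUnion_sdiff_biUnion_lt hDV, hV]
  · exact (isClosed_iUnion_of_finite fun _ => hC _ m).sdiff
      (isOpen_biUnion fun _ _ => isOpen_iUnion fun _ => hW _)
  · intro α β _ hβα m
    refine eq_empty_iff_forall_notMem.mpr ?_
    rintro x ⟨⟨-, hx⟩, hxβ⟩
    exact hx (mem_biUnion hβα hxβ)
end

section
/- Let X be a topological space, Y a subspace of X, and suppose Y is preopen in X, i.e., Y ⊆ int_X(cl_X(Y)). If there is a family α of open subsets of Y which is a union of τ strongly point-finite collections and which F-separates Y, then Y is F_τ-embedded in X: there is a family of open subsets of X which is a union of τ point-finite collections and F-separates Y (as a subset of X, with closures taken in X). -/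
def PointFinite {X : Type*} (𝒜 : Set (Set X)) : Prop :=
  ∀ x : X, {A ∈ 𝒜 | x ∈ A}.Finite

theorem preopen_F_tau_embedded {X : Type u} [TopologicalSpace X] (Y : Set X)
    (τ : Cardinal.{u}) (hpre : Y ⊆ interior (closure Y))
    (ι : Type u) (hι : Cardinal.mk ι ≤ τ) (𝒜 : ι → Set (Set X))
    (hopen : ∀ i, ∀ U ∈ 𝒜 i, U ⊆ Y ∧ ∃ V : Set X, IsOpen V ∧ U = V ∩ Y)
    (hspf : ∀ i, StronglyPointFinite (𝒜 i))
    (hsep : ∀ x ∈ Y, ∀ y ∈ Y, x ≠ y → ∃ i, ∃ U ∈ 𝒜 i,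
      (x ∈ U ∧ y ∉ closure U) ∨ (y ∈ U ∧ x ∉ closure U)) :
    ∃ 𝒲 : ι → Set (Set X),
      (∀ i, ∀ W ∈ 𝒲 i, IsOpen W) ∧ (∀ i, PointFinite (𝒲 i)) ∧
      ∀ x ∈ Y, ∀ y ∈ Y, x ≠ y → ∃ i, ∃ W ∈ 𝒲 i,
        (x ∈ W ∧ y ∉ closure W) ∨ (y ∈ W ∧ x ∉ closure W) := by
  classical
  set V : Set X → Set X := fun U =>
    if h : ∃ V : Set X, IsOpen V ∧ U = V ∩ Y then h.choose else ∅ with hVdef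
  set W : Set X → Set X := fun U => V U ∩ interior (closure Y) with hWdef
  have hVspec : ∀ i, ∀ U ∈ 𝒜 i, IsOpen (V U) ∧ U = V U ∩ Y := by
    intro i U hU
    have h := (hopen i U hU).2
    simp only [hVdef, dif_pos h]
    exact h.choose_spec
  have hWopen : ∀ U, IsOpen (W U) := by
    intro U
    by_cases h : ∃ V : Set X, IsOpen V ∧ U = V ∩ Y
    · have : IsOpen (V U) := by simpa [hVdef, dif_pos h] using h.choose_spec.1
      exact this.inter isOpen_interior
    · have : V U = ∅ := by simp [hVdef, dif_neg h]
      simp [hWdef, this]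
  have hWY : ∀ i, ∀ U ∈ 𝒜 i, W U ∩ Y = U := by
    intro i U hU
    obtain ⟨hVo, hUV⟩ := hVspec i U hU
    ext z; constructor
    · rintro ⟨⟨hz1, _⟩, hz2⟩; rw [hUV]; exact ⟨hz1, hz2⟩
    · intro hz
      have hzY : z ∈ Y := (hopen i U hU).1 hz
      rw [hUV] at hz
      exact ⟨⟨hz.1, hpre hzY⟩, hzY⟩
  have hWcl : ∀ i, ∀ U ∈ 𝒜 i, W U ⊆ closure U := by
    intro i U hU z hz
    have h1 : z ∈ W U ∩ closure Y := ⟨hz, interior_subset hz.2⟩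
    have h2 : z ∈ closure (W U ∩ Y) := (hWopen U).inter_closure h1
    rwa [hWY i U hU] at h2
  have hmemW : ∀ i, ∀ U ∈ 𝒜 i, ∀ x ∈ U, x ∈ W U := by
    intro i U hU x hx
    have hxY : x ∈ Y := (hopen i U hU).1 hx
    obtain ⟨hVo, hUV⟩ := hVspec i U hU
    rw [hUV] at hx
    exact ⟨hx.1, hpre hxY⟩
  refine ⟨fun i => W '' 𝒜 i, ?_, ?_, ?_⟩
  · rintro i _ ⟨U, hU, rfl⟩; exact hWopen U
  · intro i x
    have key : {U ∈ 𝒜 i | x ∈ W U}.Finite := by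
      by_contra hinf
      have hinf' : {U ∈ 𝒜 i | x ∈ W U}.Infinite := hinf
      set S := {U ∈ 𝒜 i | x ∈ W U} with hS
      have f := hinf'.natEmbedding
      set g : ℕ → Set X := fun n => (f n : Set X) with hg
      have hginj : Function.Injective g :=
        Subtype.coe_injective.comp f.injective
      have hgS : ∀ n, g n ∈ S := fun n => (f n).2
      set μ := Set.range g with hμ
      have hμS : μ ⊆ S := by rintro _ ⟨n, rfl⟩; exact hgS n
      have hμA : μ ⊆ 𝒜 i := fun U hU => (hμS hU).1
      obtain ⟨μ', hμ'μ, hμ'fin, hμ'empty⟩ :=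
        hspf i μ hμA (Set.countable_range g) (Set.infinite_range_of_injective hginj)
      have hxcl : x ∈ closure Y := interior_subset ((hgS 0).2).2
      have hN : IsOpen (⋂ U ∈ μ', W U) :=
        hμ'fin.isOpen_biInter (fun U _ => hWopen U)
      have hxN : x ∈ ⋂ U ∈ μ', W U := by
        refine Set.mem_biInter fun U hU => (hμS (hμ'μ hU)).2
      obtain ⟨y, hyN, hyY⟩ := (mem_closure_iff.1 hxcl) _ hN hxN
      have : y ∈ ⋂₀ μ' := by
        intro U hU
        have hUA : U ∈ 𝒜 i := hμA (hμ'μ hU)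
        have : y ∈ W U ∩ Y := ⟨Set.mem_iInter₂.1 hyN U hU, hyY⟩
        rwa [hWY i U hUA] at this
      rw [hμ'empty] at this
      exact this
    have hsub : {A ∈ W '' 𝒜 i | x ∈ A} ⊆ W '' {U ∈ 𝒜 i | x ∈ W U} := by
      rintro _ ⟨⟨U, hU, rfl⟩, hx⟩
      exact ⟨U, ⟨hU, hx⟩, rfl⟩
    exact (key.image W).subset hsub
  · intro x hx y hy hxy
    obtain ⟨i, U, hU, hcase⟩ := hsep x hx y hy hxy
    refine ⟨i, W U, ⟨U, hU, rfl⟩, ?_⟩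
    have hclW : closure (W U) ⊆ closure U := by
      have := closure_mono (hWcl i U hU)
      rwa [closure_closure] at this
    rcases hcase with ⟨hxU, hyU⟩ | ⟨hyU, hxU⟩
    · exact Or.inl ⟨hmemW i U hU x hxU, fun h => hyU (hclW h)⟩
    · exact Or.inr ⟨hmemW i U hU y hyU, fun h => hxU (hclW h)⟩
end

section
/- Let X be a normal T₁ topological space, Y a subspace with network weight nw(Y) ≤ τ, where τ ≥ ℵ₀. Then Y is F_τ-embedded in X: there exists a family 𝒲 of open subsets of X with |𝒲| ≤ τ such that for all distinct x, y ∈ Y there is W ∈ 𝒲 with x ∈ W and y ∉ cl_X(W), or vice versa. -/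
open Set

theorem normal_network_F_tau_embedded {X : Type u} [TopologicalSpace X]
    [NormalSpace X] [T1Space X] (Y : Set X) (τ : Cardinal.{u}) (hτ : Cardinal.aleph0 ≤ τ)
    (𝒩 : Set (Set X)) (hcard : Cardinal.mk 𝒩 ≤ τ) (hsub : ∀ N ∈ 𝒩, N ⊆ Y)
    (hnet : ∀ y ∈ Y, ∀ O : Set X, IsOpen O → y ∈ O → ∃ N ∈ 𝒩, y ∈ N ∧ N ⊆ O) :
    ∃ 𝒲 : Set (Set X), Cardinal.mk 𝒲 ≤ τ ∧ (∀ W ∈ 𝒲, IsOpen W) ∧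
      ∀ x ∈ Y, ∀ y ∈ Y, x ≠ y → ∃ W ∈ 𝒲,
        (x ∈ W ∧ y ∉ closure W) ∨ (y ∈ W ∧ x ∉ closure W) := by
  classical
  have key : ∀ p : 𝒩 × 𝒩, ∃ U : Set X, IsOpen U ∧
      (Disjoint (closure (p.1 : Set X)) (closure (p.2 : Set X)) →
        (p.1 : Set X) ⊆ U ∧ Disjoint (closure U) (closure (p.2 : Set X))) := by
    intro p
    by_cases h : Disjoint (closure (p.1 : Set X)) (closure (p.2 : Set X))
    · obtain ⟨U, hUo, hU1, hU2⟩ := normal_exists_closure_subset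
        (isClosed_closure (s := (p.1 : Set X)))
        (isClosed_closure (s := (p.2 : Set X))).isOpen_compl
        (Set.subset_compl_iff_disjoint_right.2 h)
      refine ⟨U, hUo, fun _ => ⟨subset_closure.trans hU1, ?_⟩⟩
      exact Set.disjoint_right.2 fun y hy hyU => (hU2 hyU) hy
    · exact ⟨∅, isOpen_empty, fun h' => absurd h' h⟩
  choose f hfo hf using key
  refine ⟨Set.range f, ?_, ?_, ?_⟩
  · calc Cardinal.mk (Set.range f) ≤ Cardinal.mk (𝒩 × 𝒩) := Cardinal.mk_range_le
      _ = Cardinal.mk 𝒩 * Cardinal.mk 𝒩 := by simp [Cardinal.mk_prod]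
      _ ≤ τ * τ := mul_le_mul' hcard hcard
      _ = τ := Cardinal.mul_eq_self hτ
  · rintro W ⟨p, rfl⟩; exact hfo p
  · intro x hx y hy hxy
    obtain ⟨A, B, hAo, hBo, hxA, hyB, hAB⟩ :=
      NormalSpace.normal {x} {y} isClosed_singleton isClosed_singleton
        (by simpa using hxy)
    obtain ⟨U, hUo, hxU, hUA⟩ := normal_exists_closure_subset isClosed_singleton hAo hxA
    obtain ⟨V, hVo, hyV, hVB⟩ := normal_exists_closure_subset isClosed_singleton hBo hyB
    obtain ⟨N, hN, hxN, hNU⟩ := hnet x hx U hUo (hxU rfl)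
    obtain ⟨M, hM, hyM, hMV⟩ := hnet y hy V hVo (hyV rfl)
    have hdis : Disjoint (closure N) (closure M) :=
      (hAB.mono hUA hVB).mono (closure_mono hNU) (closure_mono hMV)
    obtain ⟨hNW, hWdis⟩ := hf (⟨N, hN⟩, ⟨M, hM⟩) hdis
    exact ⟨f (⟨N, hN⟩, ⟨M, hM⟩), ⟨_, rfl⟩,
      Or.inl ⟨hNW hxN, fun hc => hWdis.le_bot ⟨hc, subset_closure hyM⟩⟩⟩
end

section
/- Let X be a compact Hausdorff space with X = X₁ ∪ X₂, where each X_i (with the subspace topology) has a point-countable base. Then cl_X(X₁) ∩ cl_X(X₂) has a point-countable base, and hence (by Miščenko's theorem for compact spaces) cl_X(X₁) ∩ cl_X(X₂) is metrizable. -/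
def HasPointCountableBase (T : Type*) [TopologicalSpace T] : Prop :=
  ∃ ℬ : Set (Set T), TopologicalSpace.IsTopologicalBasis ℬ ∧
    ∀ x : T, {B ∈ ℬ | x ∈ B}.Countable

/-!
Let `C = closure X₁ ∩ closure X₂`. For `B` open in `X₁`, the open set `interior (B ∪ X₁ᶜ)` of `X`
has trace `B` on `X₁` and trace inside `closure B` on `closure X₁`; these sets, built from
point-countable bases of `X₁` and `X₂`, restrict to a base of `C`. At `x ∈ closure X₁` only
countably many of them contain `x` as soon as `x` is in the closure of a countable `T ⊆ X₁`, since
each one then meets `T` inside a base element of `X₁`.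

That closure condition is the heart of the matter. For `x ∉ X₁` we have `x ∈ X₂`, where `{x}` is a
`G_δ`, so some closed `G_δ` set `K = ⋂ₘ Vₘ ∋ x` of `X` lies in `X₁ ∪ {x}`. If no countable subset of
`X₁` accumulated at `x`, then `K ∩ X₁` would be countably compact, hence compact, because it has a
point-countable base. A closed neighbourhood `W` of `x` missing it gives `K ∩ W = {x}`, and points
of `X₁` picked in the decreasing neighbourhoods `Vₘ ∩ W` accumulate at `x` after all.

Finally, a compact space with a point-countable base is second countable (Miščenko), hence
metrizable.
-/

open Set Filter Topology TopologicalSpace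

section MinimalCover

variable {α : Type*}

def IsFiniteSubcover (𝒟 : Set (Set α)) (S : Set α) (F : Finset (Set α)) : Prop :=
  ↑F ⊆ 𝒟 ∧ S ⊆ ⋃₀ ↑F

variable {𝒟 : Set (Set α)} {S : Set α} {F : Finset (Set α)}

theorem Minimal.isFiniteSubcover_erase [DecidableEq (Set α)]
    (hF : Minimal (IsFiniteSubcover 𝒟 S) F) {D : Set α} (hD : D ∈ F) :
    Minimal (IsFiniteSubcover 𝒟 (S \ D)) (F.erase D) := by
  refine ⟨⟨(Finset.coe_subset.mpr (F.erase_subset D)).trans hF.prop.1, ?_⟩, fun F' hF' hle => ?_⟩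
  · rintro x ⟨hxS, hxD⟩
    obtain ⟨E, hE, hxE⟩ := hF.prop.2 hxS
    exact ⟨E, Finset.mem_erase.mpr ⟨by rintro rfl; exact hxD hxE, hE⟩, hxE⟩
  · have hcover : IsFiniteSubcover 𝒟 S (insert D F') := by
      refine ⟨?_, fun x hxS => ?_⟩
      · rw [Finset.coe_insert]
        exact insert_subset (hF.prop.1 hD) hF'.1
      · by_cases hxD : x ∈ D
        · exact ⟨D, Finset.mem_insert_self D F', hxD⟩
        · obtain ⟨E, hE, hxE⟩ := hF'.2 ⟨hxS, hxD⟩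
          exact ⟨E, Finset.mem_insert_of_mem hE, hxE⟩
    have hFle := hF.2 hcover (Finset.insert_subset hD (hle.trans (F.erase_subset D)))
    intro E hE
    exact (Finset.mem_insert.mp (hFle (Finset.mem_of_mem_erase hE))).resolve_left
      (Finset.ne_of_mem_erase hE)

/-- Miščenko's lemma. -/
theorem countable_setOf_minimal_isFiniteSubcover (hpc : ∀ x, {D ∈ 𝒟 | x ∈ D}.Countable)
    (S : Set α) : {F | Minimal (IsFiniteSubcover 𝒟 S) F}.Countable := by
  classical
  suffices h : ∀ n S, {F | Minimal (IsFiniteSubcover 𝒟 S) F ∧ F.card = n}.Countable from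
    (countable_iUnion fun n => h n S).mono fun F hF =>
      mem_iUnion.mpr ⟨F.card, mem_ofPred.mpr ⟨hF, rfl⟩⟩
  intro n
  induction n with
  | zero => exact fun S => (countable_singleton ∅).mono fun F hF => Finset.card_eq_zero.mp hF.2
  | succ n ih =>
    intro S
    rcases S.eq_empty_or_nonempty with rfl | ⟨x, hx⟩
    · refine countable_empty.mono fun F ⟨hF, hcard⟩ => ?_
      have : F ⊆ ∅ := hF.2 ⟨by simp, empty_subset _⟩ (Finset.empty_subset F)
      simp_all
    -- a minimal cover of `S` is a member `D ∋ x` together with a minimal cover of `S \ D`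
    refine ((hpc x).biUnion fun D _ => (ih (S \ D)).image (insert D)).mono ?_
    rintro F ⟨hF, hcard⟩
    obtain ⟨D, hDF, hxD⟩ := hF.prop.2 hx
    refine mem_biUnion ⟨hF.prop.1 hDF, hxD⟩
      ⟨F.erase D, ⟨hF.isFiniteSubcover_erase hDF, ?_⟩, Finset.insert_erase hDF⟩
    rw [Finset.card_erase_of_mem hDF, hcard, Nat.add_sub_cancel]

end MinimalCover

section PointCountableBase

variable {T : Type*} [TopologicalSpace T]

theorem Topology.IsInducing.hasPointCountableBase {S : Type*} [TopologicalSpace S] {f : S → T}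
    (hf : IsInducing f) (h : HasPointCountableBase T) : HasPointCountableBase S := by
  obtain ⟨ℬ, hℬ, hpc⟩ := h
  refine ⟨preimage f '' ℬ, hℬ.isInducing hf, fun x => ((hpc (f x)).image (preimage f)).mono ?_⟩
  rintro _ ⟨⟨B, hB, rfl⟩, hx⟩
  exact ⟨B, ⟨hB, hx⟩, rfl⟩

theorem HasPointCountableBase.firstCountableTopology (h : HasPointCountableBase T) :
    FirstCountableTopology T := by
  obtain ⟨ℬ, hℬ, hpc⟩ := h
  exact ⟨fun x => HasCountableBasis.isCountablyGenerated ⟨hℬ.nhds_hasBasis (a := x), hpc x⟩⟩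

theorem HasPointCountableBase.secondCountableTopology [CompactSpace T] [T1Space T]
    (h : HasPointCountableBase T) : SecondCountableTopology T := by
  obtain ⟨ℬ, hℬ, hpc⟩ := h
  refine (isTopologicalBasis_of_isOpen_of_nhds
    (s := ⋃ F ∈ {F | Minimal (IsFiniteSubcover ℬ univ) F}, (F : Set (Set T))) ?_ ?_)
    |>.secondCountableTopology <|
    (countable_setOf_minimal_isFiniteSubcover hpc univ).biUnion fun F _ => F.countable_toSet
  · intro D hD
    obtain ⟨F, hF, hDF⟩ := mem_iUnion₂.mp hD
    exact hℬ.isOpen (hF.prop.1 hDF)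
  · intro x U hxU hU
    obtain ⟨D, hD, hxD, hDU⟩ := hℬ.exists_subset_of_mem_open hxU hU
    -- `D` is the only member of `𝒰` containing `x`, so it survives in every minimal subcover
    set 𝒰 := insert D {B ∈ ℬ | x ∉ B}
    have h𝒰ℬ : 𝒰 ⊆ ℬ := insert_subset hD (sep_subset _ _)
    have hcover : univ ⊆ ⋃ B ∈ 𝒰, B := by
      intro y _
      rcases eq_or_ne y x with rfl | hyx
      · exact mem_biUnion (mem_insert D _) hxD
      obtain ⟨B, hB, hyB, hBx⟩ := hℬ.exists_subset_of_mem_open hyx isOpen_compl_singleton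
      exact mem_biUnion (mem_insert_of_mem D ⟨hB, fun hxB => hBx hxB rfl⟩) hyB
    obtain ⟨𝒰₀, h𝒰₀, hfin, hcover₀⟩ :=
      isCompact_univ.elim_finite_subcover_image (fun B hB => hℬ.isOpen (h𝒰ℬ hB)) hcover
    obtain ⟨F, hF𝒰₀, hF⟩ := exists_minimal_le_of_wellFoundedLT (IsFiniteSubcover ℬ univ)
      hfin.toFinset ⟨by simpa using h𝒰₀.trans h𝒰ℬ, by simpa [sUnion_eq_biUnion] using hcover₀⟩
    obtain ⟨E, hEF, hxE⟩ := hF.prop.2 (mem_univ x)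
    have hED : E = D :=
      (h𝒰₀ (hfin.mem_toFinset.mp (hF𝒰₀ hEF))).resolve_right fun hE => hE.2 hxE
    exact ⟨D, mem_biUnion hF (hED ▸ hEF), hxD, hDU⟩

theorem CountablyCompactSpace.exists_countable_subcover_of_pointCountable [CountablyCompactSpace T]
    {𝒱 : Set (Set T)} (hopen : ∀ V ∈ 𝒱, IsOpen V) (hcover : ⋃₀ 𝒱 = univ)
    (hpc : ∀ x, {V ∈ 𝒱 | x ∈ V}.Countable) : ∃ 𝒲 ⊆ 𝒱, 𝒲.Countable ∧ ⋃₀ 𝒲 = univ := by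
  classical
  by_contra! h
  have hnext : ∀ s : Finset T, ∃ y, ∀ V ∈ 𝒱, y ∈ V → ∀ x ∈ s, x ∉ V := by
    intro s
    have hcount : {V ∈ 𝒱 | ∃ x ∈ s, x ∈ V}.Countable :=
      (s.countable_toSet.biUnion fun x _ => hpc x).mono <| by
        rintro V ⟨hV, x, hx, hxV⟩
        exact mem_biUnion hx ⟨hV, hxV⟩
    obtain ⟨y, hy⟩ := (ne_univ_iff_exists_notMem _).mp (h _ (sep_subset _ _) hcount)
    exact ⟨y, fun V hV hyV x hx hxV => hy ⟨V, ⟨hV, x, hx, hxV⟩, hyV⟩⟩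
  choose next hnext using hnext
  -- `u n` lies in no member of `𝒱` meeting `{u 0, …, u (n - 1)} ⊆ s n`
  let s : ℕ → Finset T := fun n => (fun s => insert (next s) s)^[n] ∅
  let u : ℕ → T := fun n => next (s n)
  have hs : Monotone s := monotone_nat_of_le_succ fun n => by
    simp only [s, Function.iterate_succ_apply']
    exact Finset.subset_insert _ _
  have hu : ∀ n, u n ∈ s (n + 1) := fun n => by
    simp only [s, u, Function.iterate_succ_apply']
    exact Finset.mem_insert_self _ _
  obtain ⟨c, -, hc⟩ := isCountablyCompact_univ.seq_clusterPt u (by simp)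
  obtain ⟨V, hV, hcV⟩ := mem_sUnion.mp (hcover ▸ mem_univ c)
  have hfreq := mapClusterPt_iff_frequently.mp hc V ((hopen V hV).mem_nhds hcV)
  obtain ⟨n, -, hn⟩ := frequently_atTop.mp hfreq 0
  obtain ⟨m, hnm, hm⟩ := frequently_atTop.mp hfreq (n + 1)
  exact hnext (s m) V hV hm (u n) (hs hnm (hu n)) hn

theorem HasPointCountableBase.lindelofSpace [CountablyCompactSpace T]
    (h : HasPointCountableBase T) : LindelofSpace T := by
  obtain ⟨ℬ, hℬ, hpc⟩ := h
  refine ⟨isLindelof_of_countable_subcover fun U hU hcover => ?_⟩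
  have hcover' : ⋃₀ {B ∈ ℬ | ∃ i, B ⊆ U i} = univ := by
    refine eq_univ_of_forall fun x => ?_
    obtain ⟨i, hxi⟩ := mem_iUnion.mp (hcover (mem_univ x))
    obtain ⟨B, hB, hxB, hBU⟩ := hℬ.exists_subset_of_mem_open hxi (hU i)
    exact ⟨B, ⟨hB, i, hBU⟩, hxB⟩
  obtain ⟨𝒲, h𝒲, h𝒲c, h𝒲cover⟩ := CountablyCompactSpace.exists_countable_subcover_of_pointCountable
    (fun B hB => hℬ.isOpen hB.1) hcover' fun x => (hpc x).mono fun B hB => mem_sep hB.1.1 hB.2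
  have := h𝒲c.to_subtype
  choose i hi using fun B : 𝒲 => (h𝒲 B.2).2
  refine ⟨range i, countable_range i, fun x _ => ?_⟩
  obtain ⟨B, hB, hxB⟩ := mem_sUnion.mp (h𝒲cover ▸ mem_univ x)
  exact mem_biUnion (mem_range_self ⟨B, hB⟩) (hi ⟨B, hB⟩ hxB)

theorem IsCountablyCompact.isCompact_of_hasPointCountableBase {A : Set T}
    (hA : IsCountablyCompact A) (h : HasPointCountableBase A) : IsCompact A := by
  have := isCountablyCompact_iff_countablyCompactSpace.mp hA
  have := h.lindelofSpace
  exact isCompact_iff_compactSpace.mpr LindelofSpace.compactSpace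

end PointCountableBase

section Closure

variable {X : Type*} [TopologicalSpace X]

theorem Topology.IsInducing.exists_isGδ_preimage_eq {Y : Type*} [TopologicalSpace Y] {f : Y → X}
    (hf : IsInducing f) {s : Set Y} (hs : IsGδ s) : ∃ t, IsGδ t ∧ f ⁻¹' t = s := by
  obtain ⟨u, hu, rfl⟩ := isGδ_iff_eq_iInter_nat.mp hs
  choose v hv hvu using fun n => hf.isOpen_iff.mp (hu n)
  exact ⟨⋂ n, v n, .iInter_of_isOpen hv, by simp only [preimage_iInter, hvu]⟩

theorem IsGδ.exists_antitone_isClosed_nhds [RegularSpace X] {G : Set X} {z : X} (hG : IsGδ G)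
    (hz : z ∈ G) : ∃ V : ℕ → Set X, Antitone V ∧ (∀ m, V m ∈ 𝓝 z ∧ IsClosed (V m)) ∧
      ⋂ m, V m ⊆ G := by
  obtain ⟨U, hU, rfl⟩ := isGδ_iff_eq_iInter_nat.mp hG
  choose W hW hWc hWU using fun m =>
    exists_mem_nhds_isClosed_subset ((hU m).mem_nhds (mem_iInter.mp hz m))
  refine ⟨fun m => ⋂ k ∈ Iic m, W k, fun m n hmn => biInter_mono (Iic_subset_Iic.mpr hmn)
    fun _ _ => subset_rfl, fun m => ⟨(biInter_mem (finite_Iic m)).mpr fun k _ => hW k,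
    isClosed_biInter fun k _ => hWc k⟩, iInter_mono fun m => ?_⟩
  exact (biInter_subset_of_mem (mem_Iic.mpr le_rfl)).trans (hWU m)

theorem MapClusterPt.exists_countable_subset_mem_closure {A : Set X} {u : ℕ → X} {c : X}
    (hc : MapClusterPt c atTop u) (hu : ∀ᶠ n in atTop, u n ∈ A) :
    ∃ T ⊆ A, T.Countable ∧ c ∈ closure T := by
  obtain ⟨N, hN⟩ := eventually_atTop.mp hu
  exact ⟨u '' Ici N, image_subset_iff.mpr hN, (to_countable _).image u,
    mapClusterPt_atTop_iff_forall_mem_closure.mp hc N⟩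

theorem Antitone.exists_mem_iInter_mem_closure_countable [CompactSpace X] {A : Set X}
    {O : ℕ → Set X} (hO : Antitone O) (hOc : ∀ m, IsClosed (O m)) (hA : ∀ m, (O m ∩ A).Nonempty) :
    ∃ c ∈ ⋂ m, O m, ∃ T ⊆ A, T.Countable ∧ c ∈ closure T := by
  choose u hu using hA
  obtain ⟨c, -, hc⟩ := isCompact_univ.isCountablyCompact.seq_clusterPt u (by simp)
  refine ⟨c, mem_iInter.mpr fun m => ?_, hc.exists_countable_subset_mem_closure
    (.of_forall fun n => (hu n).2)⟩
  refine closure_minimal ?_ (hOc m) (mapClusterPt_atTop_iff_forall_mem_closure.mp hc m)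
  rintro _ ⟨n, hn, rfl⟩
  exact hO hn (hu n).1

theorem exists_countable_subset_mem_closure_of_isGδ [CompactSpace X] [T2Space X] {A G : Set X}
    {z : X} (hA : HasPointCountableBase A) (hG : IsGδ G) (hzG : z ∈ G) (hGA : G ⊆ insert z A)
    (hz : z ∈ closure A) : ∃ T ⊆ A, T.Countable ∧ z ∈ closure T := by
  by_contra! hcon
  obtain ⟨V, hVanti, hV, hVG⟩ := hG.exists_antitone_isClosed_nhds hzG
  have hK : IsClosed (⋂ m, V m) := isClosed_iInter fun m => (hV m).2
  have hKA : ∀ c ∈ ⋂ m, V m, c ≠ z → c ∈ A := fun c hc hcz => (hGA (hVG hc)).resolve_left hcz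
  have hY : IsCompact ((⋂ m, V m) ∩ A) := by
    refine IsCountablyCompact.isCompact_of_hasPointCountableBase ?_
      ((IsEmbedding.inclusion inter_subset_right).isInducing.hasPointCountableBase hA)
    refine IsCountablyCompact.of_seq_clusterPt fun u hu => ?_
    obtain ⟨c, hcK, hc⟩ := hK.isCountablyCompact.seq_clusterPt u (hu.mono fun n hn => hn.1)
    refine ⟨c, ⟨hcK, hKA c hcK ?_⟩, hc⟩
    rintro rfl
    obtain ⟨T, hTA, hTc, hzT⟩ := hc.exists_countable_subset_mem_closure (hu.mono fun n hn => hn.2)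
    exact hcon T hTA hTc hzT
  -- a closed neighbourhood `W` of `z` missing the compact set `⋂ V ∩ A` cuts `⋂ V` down to `{z}`
  obtain ⟨W, hW, hWc, hWY⟩ := exists_mem_nhds_isClosed_subset
    (hY.isClosed.isOpen_compl.mem_nhds fun hzY => hcon {z} (singleton_subset_iff.mpr hzY.2)
      (countable_singleton z) (subset_closure rfl))
  obtain ⟨c, hc, T, hTA, hTc, hcT⟩ := Antitone.exists_mem_iInter_mem_closure_countable
    (O := fun m => V m ∩ W) (hVanti.inter antitone_const) (fun m => (hV m).2.inter hWc)
    fun m => mem_closure_iff_nhds.mp hz _ (inter_mem (hV m).1 hW)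
  have hcK : c ∈ ⋂ m, V m := mem_iInter.mpr fun m => (mem_iInter.mp hc m).1
  have hcz : c = z := by
    by_contra hcz
    exact hWY (mem_iInter.mp hc 0).2 ⟨hcK, hKA c hcK hcz⟩
  exact hcon T hTA hTc (hcz ▸ hcT)

theorem hasPointCountableBase_of_isOpen {S : Set X} {𝒰 : Set (Set X)}
    (hopen : ∀ U ∈ 𝒰, IsOpen U) (hnhds : ∀ x ∈ S, ∀ W ∈ 𝓝 x, ∃ U ∈ 𝒰, x ∈ U ∧ U ∩ S ⊆ W)
    (hpc : ∀ x ∈ S, {U ∈ 𝒰 | x ∈ U}.Countable) : HasPointCountableBase S := by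
  refine ⟨preimage Subtype.val '' 𝒰, isTopologicalBasis_of_isOpen_of_nhds ?_ ?_, fun x => ?_⟩
  · rintro _ ⟨U, hU, rfl⟩
    exact (hopen U hU).preimage continuous_subtype_val
  · intro x u hxu hu
    obtain ⟨W, hW, rfl⟩ := IsInducing.subtypeVal.isOpen_iff.mp hu
    obtain ⟨U, hU, hxU, hUW⟩ := hnhds x x.2 W (hW.mem_nhds hxu)
    exact ⟨_, ⟨U, hU, rfl⟩, hxU, fun y hy => hUW ⟨hy, y.2⟩⟩
  · refine ((hpc x x.2).image (preimage Subtype.val)).mono ?_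
    rintro _ ⟨⟨U, hU, rfl⟩, hxU⟩
    exact ⟨U, ⟨hU, hxU⟩, rfl⟩

/-- The family consists of the sets `interior (B ∪ Aᶜ)`, `B` in a point-countable base of `A`. -/
theorem exists_isOpen_extension_family [RegularSpace X] {A : Set X}
    (hA : HasPointCountableBase A)
    (hsep : ∀ x ∈ closure A, ∃ T ⊆ A, T.Countable ∧ x ∈ closure T) :
    ∃ 𝒰 : Set (Set X), (∀ U ∈ 𝒰, IsOpen U) ∧
      (∀ x ∈ A, ∀ W ∈ 𝓝 x, ∃ U ∈ 𝒰, x ∈ U ∧ U ∩ closure A ⊆ W) ∧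
      ∀ x ∈ closure A, {U ∈ 𝒰 | x ∈ U}.Countable := by
  obtain ⟨ℬ, hℬ, hpc⟩ := hA
  set e : Set A → Set X := fun B => interior (Subtype.val '' B ∪ Aᶜ)
  have he : ∀ B, e B ∩ A ⊆ Subtype.val '' B := fun B y ⟨hyB, hyA⟩ =>
    (interior_subset hyB).resolve_right (not_not_intro hyA)
  refine ⟨e '' ℬ, ?_, ?_, ?_⟩
  · rintro _ ⟨B, -, rfl⟩
    exact isOpen_interior
  · intro x hx W hW
    obtain ⟨W', hW', hW'c, hW'W⟩ := exists_mem_nhds_isClosed_subset hW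
    obtain ⟨B, hB, hxB, hBW'⟩ := hℬ.exists_subset_of_mem_open
      (show (⟨x, hx⟩ : A) ∈ Subtype.val ⁻¹' interior W' from mem_interior_iff_mem_nhds.mpr hW')
      (isOpen_interior.preimage continuous_subtype_val)
    obtain ⟨V, hV, hVB⟩ := IsInducing.subtypeVal.isOpen_iff.mp (hℬ.isOpen hB)
    have hVe : V ⊆ e B := interior_maximal (fun y hyV => by
      by_cases hyA : y ∈ A
      · exact Or.inl ⟨⟨y, hyA⟩, hVB ▸ hyV, rfl⟩
      · exact Or.inr hyA) hV
    have hxV : (⟨x, hx⟩ : A) ∈ Subtype.val ⁻¹' V := hVB ▸ hxB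
    refine ⟨e B, mem_image_of_mem e hB, hVe hxV, ?_⟩
    calc e B ∩ closure A ⊆ closure (e B ∩ A) := isOpen_interior.inter_closure
      _ ⊆ closure (Subtype.val '' B) := closure_mono (he B)
      _ ⊆ W' := closure_minimal (image_subset_iff.mpr (hBW'.trans
          (preimage_mono interior_subset))) hW'c
      _ ⊆ W := hW'W
  · -- every `e B ∋ x` meets the countable set `T`, and `e B ∩ A ⊆ B`
    intro x hx
    obtain ⟨T, hTA, hTc, hxT⟩ := hsep x hx
    refine ((((hTc.preimage Subtype.val_injective).biUnion fun t _ => hpc t)).image e).mono ?_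
    rintro _ ⟨⟨B, hB, rfl⟩, hxB⟩
    obtain ⟨y, hyB, hyT⟩ := mem_closure_iff.mp hxT _ isOpen_interior hxB
    obtain ⟨t, ht, rfl⟩ := he B ⟨hyB, hTA hyT⟩
    exact ⟨B, mem_biUnion (show t ∈ Subtype.val ⁻¹' T from hyT) ⟨hB, ht⟩, rfl⟩

theorem exists_countable_subset_mem_closure_of_union_eq_univ [CompactSpace X] [T2Space X]
    {X₁ X₂ : Set X} (hcover : X₁ ∪ X₂ = univ) (h1 : HasPointCountableBase X₁)
    (h2 : HasPointCountableBase X₂) {z : X} (hz : z ∈ closure X₁) :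
    ∃ T ⊆ X₁, T.Countable ∧ z ∈ closure T := by
  have hmem : ∀ y, y ∉ X₁ → y ∈ X₂ := fun y hy =>
    (show y ∈ X₁ ∪ X₂ from hcover ▸ mem_univ y).resolve_left hy
  by_cases hz1 : z ∈ X₁
  · exact ⟨{z}, singleton_subset_iff.mpr hz1, countable_singleton z, subset_closure rfl⟩
  have := h2.firstCountableTopology
  obtain ⟨G, hG, hGz⟩ :=
    IsInducing.subtypeVal.exists_isGδ_preimage_eq (IsGδ.singleton (⟨z, hmem z hz1⟩ : X₂))
  refine exists_countable_subset_mem_closure_of_isGδ h1 hG ?_ ?_ hz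
  · exact show (⟨z, hmem z hz1⟩ : X₂) ∈ Subtype.val ⁻¹' G from hGz ▸ rfl
  · intro y hy
    by_cases hy1 : y ∈ X₁
    · exact Or.inr hy1
    · have : (⟨y, hmem y hy1⟩ : X₂) ∈ Subtype.val ⁻¹' G := hy
      rw [hGz] at this
      exact Or.inl (congrArg Subtype.val this)

theorem hasPointCountableBase_closure_inter_closure [CompactSpace X] [T2Space X]
    {X₁ X₂ : Set X} (hcover : X₁ ∪ X₂ = univ) (h1 : HasPointCountableBase X₁)
    (h2 : HasPointCountableBase X₂) : HasPointCountableBase ↥(closure X₁ ∩ closure X₂) := by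
  obtain ⟨𝒰₁, hopen₁, hnhds₁, hpc₁⟩ := exists_isOpen_extension_family h1
    fun _ => exists_countable_subset_mem_closure_of_union_eq_univ hcover h1 h2
  obtain ⟨𝒰₂, hopen₂, hnhds₂, hpc₂⟩ := exists_isOpen_extension_family h2
    fun _ => exists_countable_subset_mem_closure_of_union_eq_univ (union_comm X₁ X₂ ▸ hcover) h2 h1
  refine hasPointCountableBase_of_isOpen (𝒰 := 𝒰₁ ∪ 𝒰₂)
    (fun U hU => hU.elim (hopen₁ U) (hopen₂ U)) (fun x hx W hW => ?_) fun x hx => ?_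
  · rcases (show x ∈ X₁ ∪ X₂ from hcover ▸ mem_univ x) with hx1 | hx2
    · obtain ⟨U, hU, hxU, hUW⟩ := hnhds₁ x hx1 W hW
      exact ⟨U, Or.inl hU, hxU, (inter_subset_inter_right U inter_subset_left).trans hUW⟩
    · obtain ⟨U, hU, hxU, hUW⟩ := hnhds₂ x hx2 W hW
      exact ⟨U, Or.inr hU, hxU, (inter_subset_inter_right U inter_subset_right).trans hUW⟩
  · refine ((hpc₁ x hx.1).union (hpc₂ x hx.2)).mono ?_
    rintro U ⟨hU | hU, hxU⟩
    exacts [Or.inl ⟨hU, hxU⟩, Or.inr ⟨hU, hxU⟩]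

end Closure

theorem closure_inter_metrizable {X : Type*} [TopologicalSpace X]
    [CompactSpace X] [T2Space X] (X₁ X₂ : Set X) (hcover : X₁ ∪ X₂ = Set.univ)
    (h1 : HasPointCountableBase ↥X₁) (h2 : HasPointCountableBase ↥X₂) :
    HasPointCountableBase ↥(closure X₁ ∩ closure X₂) ∧
      TopologicalSpace.MetrizableSpace ↥(closure X₁ ∩ closure X₂) := by
  have hC := hasPointCountableBase_closure_inter_closure hcover h1 h2
  have : CompactSpace ↥(closure X₁ ∩ closure X₂) :=
    isCompact_iff_compactSpace.mp (isClosed_closure.inter isClosed_closure).isCompact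
  have := hC.secondCountableTopology
  exact ⟨hC, inferInstance⟩
end

section
/- Let ℬ = ⋃_{n∈ℕ} ℬ_n be a base of a topological space X with each ℬ_n disjoint, and suppose every U ∈ ℬ can be written as U = ⋃_{m} ⋃ 𝒜_U^m where each 𝒜_U^m is a boundedly point-finite family of open sets contained in U. Then the families 𝒜_n^m := ⋃{𝒜_U^m : U ∈ ℬ_n} are strongly point-finite, and 𝒜 := ⋃_{m,n} 𝒜_n^m is a σ-strongly point-finite base of X. -/
def BoundedlyPointFinite {X : Type*} (𝒜 : Set (Set X)) : Prop :=
  ∃ n : ℕ, ∀ μ ⊆ 𝒜, μ.Finite → n + 2 ≤ μ.ncard → ⋂₀ μ = ∅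

theorem sigma_disjoint_to_sigma_strongly_point_finite
    {X : Type*} [TopologicalSpace X] (ℬ : ℕ → Set (Set X))
    (hbase : TopologicalSpace.IsTopologicalBasis (⋃ n, ℬ n))
    (hdisj : ∀ n, ∀ A ∈ ℬ n, ∀ B ∈ ℬ n, A ≠ B → A ∩ B = ∅)
    (𝒜 : Set X → ℕ → Set (Set X))
    (h𝒜 : ∀ n, ∀ U ∈ ℬ n,
      (∀ m, BoundedlyPointFinite (𝒜 U m) ∧ ∀ W ∈ 𝒜 U m, IsOpen W ∧ W ⊆ U) ∧
      U = ⋃ m, ⋃₀ 𝒜 U m) :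
    (∀ n m : ℕ, StronglyPointFinite {W : Set X | ∃ U ∈ ℬ n, W ∈ 𝒜 U m}) ∧
    TopologicalSpace.IsTopologicalBasis
      (⋃ n, ⋃ m, {W : Set X | ∃ U ∈ ℬ n, W ∈ 𝒜 U m}) := by
  constructor
  · intro n m μ hμ _ hinf
    have hch : ∀ W ∈ μ, ∃ U ∈ ℬ n, W ∈ 𝒜 U m := fun W hW => hμ hW
    choose! U hU h𝒜U using hch
    by_cases hcase : ∃ W1 ∈ μ, ∃ W2 ∈ μ, U W1 ≠ U W2
    · obtain ⟨W1, h1, W2, h2, hne⟩ := hcase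
      refine ⟨{W1, W2}, ?_, (Set.finite_singleton _).insert _, ?_⟩
      · intro x hx
        rcases hx with rfl | rfl
        · exact h1
        · exact h2
      · have hd := hdisj n _ (hU W1 h1) _ (hU W2 h2) hne
        have hs1 : W1 ⊆ U W1 := (((h𝒜 n _ (hU W1 h1)).1 m).2 W1 (h𝒜U W1 h1)).2
        have hs2 : W2 ⊆ U W2 := (((h𝒜 n _ (hU W2 h2)).1 m).2 W2 (h𝒜U W2 h2)).2
        have : ⋂₀ ({W1, W2} : Set (Set X)) ⊆ U W1 ∩ U W2 := by
          rw [Set.sInter_pair]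
          exact Set.inter_subset_inter hs1 hs2
        rw [hd] at this
        exact Set.subset_eq_empty this rfl
    · push_neg at hcase
      obtain ⟨W0, hW0⟩ := hinf.nonempty
      have hsub : μ ⊆ 𝒜 (U W0) m := by
        intro W hW
        rw [← hcase W hW W0 hW0]
        exact h𝒜U W hW
      obtain ⟨k, hk⟩ := ((h𝒜 n _ (hU W0 hW0)).1 m).1
      obtain ⟨μ', hμ'sub, hfin, hcard⟩ := hinf.exists_subset_ncard_eq (k + 2)
      exact ⟨μ', hμ'sub, hfin, hk μ' (hμ'sub.trans hsub) hfin hcard.ge⟩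
  · apply TopologicalSpace.isTopologicalBasis_of_isOpen_of_nhds
    · intro W hW
      simp only [Set.mem_iUnion, Set.mem_setOf_eq] at hW
      obtain ⟨n, m, Uu, hUu, hWm⟩ := hW
      exact (((h𝒜 n Uu hUu).1 m).2 W hWm).1
    · intro x s hx hs
      obtain ⟨Uu, hUmem, hxU, hUs⟩ := hbase.exists_subset_of_mem_open hx hs
      simp only [Set.mem_iUnion] at hUmem
      obtain ⟨n, hUn⟩ := hUmem
      have heq := (h𝒜 n Uu hUn).2
      rw [heq] at hxU
      simp only [Set.mem_iUnion, Set.mem_sUnion] at hxU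
      obtain ⟨m, W, hWm, hxW⟩ := hxU
      refine ⟨W, ?_, hxW, ((((h𝒜 n Uu hUn).1 m).2 W hWm).2).trans hUs⟩
      simp only [Set.mem_iUnion, Set.mem_setOf_eq]
      exact ⟨n, m, Uu, hUn, hWm⟩
end
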